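/- There is an absolute constant C>0 such that, in the kernel setting of the context (unit speed, r>0, t>0, λ₋=|t−r|, λ₊=t+r, δ=min{r,1/2}), for every λ with λ₋<λ<λ₊ one has ∫_{−φ}^{φ} K₁(λ,ψ;r,t) dψ = 2∫₀¹ K₂(λ,τ;r,t) dτ ≤ (C/(rλ)^{1/2}) log( 2 + rλ·h(t−r) / ((λ−λ₋)(λ₊−λ)) ), where h(p)=1 for p>0 and h(p)=0 for p≤0. -/

import Mathlib

/-!
The substitution `τ = (1 - cos ψ) / (1 - cos φ)` maps `(0, φ)` onto `(0, 1)` and carries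
`K₁ dψ` to `K₂ dτ`; together with the evenness of `K₁` this gives the identity.

For the bound write `b = 1 + cos φ`, so that `2 - (1 - cos φ) τ = 2 (1 - τ) + b τ`. Near each
endpoint of `(0, 1)` the radicand of `K₂` is then comparable to `s (s + b)`, `s` being the distance
to that endpoint, and `2 log (√s + √(s + b))` is a primitive of `1 / √(s (s + b))`; hence
`∫₀¹ K₂ ≤ (rλ)^(-1/2) log (2 + 4 / b)`. Finally `2 r λ b = (r + λ - t) (r + λ + t)`, so `1 / b` is
at most `1` when `t ≤ r` and at most `2 r λ / ((λ - λ₋) (λ₊ - λ))` when `t > r`.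
-/

open Real intervalIntegral

noncomputable section

/-- `φ(λ; r, t) = arccos((r² + λ² − t²)/(2rλ))`. -/
def phiK (l r t : ℝ) : ℝ := Real.arccos ((r ^ 2 + l ^ 2 - t ^ 2) / (2 * r * l))

/-- `K₁(λ, ψ; r, t) = 1/(2π √(t² − r² − λ² + 2rλ cos ψ))`. -/
def K1 (l ψ r t : ℝ) : ℝ :=
  1 / (2 * Real.pi * Real.sqrt (t ^ 2 - r ^ 2 - l ^ 2 + 2 * r * l * Real.cos ψ))

/-- `K₂(λ, τ; r, t) = 1/(2π √(2rλτ(1−τ)(2−(1−cos φ)τ)))`. -/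
def K2 (l τ r t : ℝ) : ℝ :=
  1 / (2 * Real.pi *
    Real.sqrt (2 * r * l * τ * (1 - τ) * (2 - (1 - Real.cos (phiK l r t)) * τ)))

/-- `Ψ(λ, τ; r, t) = arccos(1 − (1 − cos φ)τ)`. -/
def PsiK (l τ r t : ℝ) : ℝ := Real.arccos (1 - (1 - Real.cos (phiK l r t)) * τ)

open MeasureTheory Set

section InvSqrtIntegral

variable {b : ℝ}

theorem hasDerivAt_two_mul_log_sqrt_add_sqrt {s : ℝ} (hb : 0 ≤ b) (hs : 0 < s) :
    HasDerivAt (fun s => 2 * log (√s + √(s + b))) (1 / √(s * (s + b))) s := by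
  have hsb : 0 < s + b := by linarith
  have hsum : HasDerivAt (fun s => √s + √(s + b)) (1 / (2 * √s) + 1 / (2 * √(s + b))) s :=
    (hasDerivAt_sqrt hs.ne').add (((hasDerivAt_id s).add_const b).sqrt hsb.ne' |>.congr_deriv
      (by simp))
  refine ((hsum.log (by positivity)).const_mul 2).congr_deriv ?_
  have h1 := sqrt_pos.2 hs
  have h2 := sqrt_pos.2 hsb
  rw [sqrt_mul hs.le]
  field_simp
  ring

theorem continuousOn_two_mul_log_sqrt_add_sqrt (hb : 0 < b) (c : ℝ) :
    ContinuousOn (fun s => 2 * log (√s + √(s + b))) (Icc 0 c) := by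
  refine continuousOn_const.mul (ContinuousOn.log (by fun_prop) fun s hs => ?_)
  have : 0 < √(s + b) := sqrt_pos.2 (by linarith [hs.1])
  positivity

theorem intervalIntegrable_one_div_sqrt_mul_add (hb : 0 < b) (c : ℝ) (hc : 0 ≤ c) :
    IntervalIntegrable (fun s => 1 / √(s * (s + b))) volume 0 c :=
  (intervalIntegrable_iff_integrableOn_Ioc_of_le hc).2 <|
    integrableOn_deriv_of_nonneg (continuousOn_two_mul_log_sqrt_add_sqrt hb c)
      (fun _ hs => hasDerivAt_two_mul_log_sqrt_add_sqrt hb.le hs.1) fun _ _ => by positivity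

theorem integral_one_div_sqrt_mul_add (hb : 0 < b) (c : ℝ) (hc : 0 ≤ c) :
    ∫ s in (0:ℝ)..c, 1 / √(s * (s + b)) = 2 * log (√c + √(c + b)) - log b := by
  rw [integral_eq_sub_of_hasDerivAt_of_le hc (continuousOn_two_mul_log_sqrt_add_sqrt hb c)
    (fun _ hs => hasDerivAt_two_mul_log_sqrt_add_sqrt hb.le hs.1)
    (intervalIntegrable_one_div_sqrt_mul_add hb c hc)]
  simp only [sqrt_zero, zero_add, log_sqrt hb.le]
  ring

theorem integral_one_div_sqrt_mul_add_le (hb : 0 < b) :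
    ∫ s in (0:ℝ)..1, 1 / √(s * (s + b)) ≤ log (2 + 4 / b) := by
  have hsq : 0 < √(1 + b) := sqrt_pos.2 (by linarith)
  rw [integral_one_div_sqrt_mul_add hb 1 zero_le_one, sqrt_one,
    show 2 * log (1 + √(1 + b)) = log ((1 + √(1 + b)) ^ 2) by simp [log_pow],
    ← log_div (by positivity) hb.ne']
  refine log_le_log (by positivity) ?_
  rw [div_le_iff₀ hb, add_mul, div_mul_cancel₀ _ hb.ne']
  nlinarith [sq_sqrt (show (0:ℝ) ≤ 1 + b by linarith), sq_nonneg (1 - √(1 + b))]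

theorem intervalIntegrable_symmetric_majorant (hb : 0 < b) :
    IntervalIntegrable (fun τ => 1 / √(τ * (τ + b)) + 1 / √((1 - τ) * ((1 - τ) + b)))
      volume 0 1 := by
  have hj := intervalIntegrable_one_div_sqrt_mul_add hb 1 zero_le_one
  refine hj.add ?_
  simpa using (hj.comp_sub_left 1).symm

theorem integral_symmetric_majorant (hb : 0 < b) :
    ∫ τ in (0:ℝ)..1, (1 / √(τ * (τ + b)) + 1 / √((1 - τ) * ((1 - τ) + b)))
      = 2 * ∫ s in (0:ℝ)..1, 1 / √(s * (s + b)) := by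
  have hj := intervalIntegrable_one_div_sqrt_mul_add hb 1 zero_le_one
  rw [intervalIntegral.integral_add hj (by simpa using (hj.comp_sub_left 1).symm),
    intervalIntegral.integral_comp_sub_left (fun s => 1 / √(s * (s + b)))]
  norm_num
  ring

end InvSqrtIntegral

theorem min_le_five_mul {c τ : ℝ} (hc : c ∈ Icc (-1:ℝ) 1) (hτ : τ ∈ Icc (0:ℝ) 1) :
    min (τ * (τ + (1 + c))) ((1 - τ) * ((1 - τ) + (1 + c)))
      ≤ 5 * (τ * (1 - τ) * (2 - (1 - c) * τ)) := by
  obtain ⟨hc0, hc1⟩ := hc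
  obtain ⟨h0, h1⟩ := hτ
  rcases le_total τ (1/2) with h | h
  · have hX : 1/2 ≤ (1 - τ) * (2 - (1 - c) * τ) := by
      have hB : 1 ≤ 2 - (1 - c) * τ := by nlinarith [mul_nonneg (sub_nonneg.2 hc1) h0]
      nlinarith [mul_le_mul (show 1/2 ≤ 1 - τ by linarith) hB zero_le_one (by linarith)]
    refine (min_le_left _ _).trans ?_
    nlinarith [mul_le_mul_of_nonneg_left hX h0]
  · have hX : 5 / 2 * (2 * (1 - τ) + (1 + c) / 2) ≤ 5 * τ * (2 - (1 - c) * τ) := by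
      nlinarith [mul_nonneg (sub_nonneg.2 h1) (sub_nonneg.2 h),
        mul_nonneg (show 0 ≤ 1 + c by linarith)
          (mul_nonneg (sub_nonneg.2 h) (by linarith : 0 ≤ τ + 1/2))]
    refine (min_le_right _ _).trans ?_
    nlinarith [mul_le_mul_of_nonneg_left hX (sub_nonneg.2 h1)]

theorem one_div_sqrt_min_le {x y : ℝ} : 1 / √(min x y) ≤ 1 / √x + 1 / √y := by
  rcases min_cases x y with ⟨h, _⟩ | ⟨h, _⟩ <;> rw [h]
  · exact le_add_of_nonneg_right (by positivity)
  · exact le_add_of_nonneg_left (by positivity)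

section K2Integral

variable {l r t : ℝ}

theorem K2_le_symmetric_majorant {τ : ℝ} (hr : 0 < r) (hl : 0 < l) (hτ : τ ∈ Ioo (0:ℝ) 1) :
    K2 l τ r t ≤ 1 / (2 * √(r * l)) *
      (1 / √(τ * (τ + (1 + cos (phiK l r t))))
        + 1 / √((1 - τ) * ((1 - τ) + (1 + cos (phiK l r t))))) := by
  set c := cos (phiK l r t)
  obtain ⟨hc0, hc1⟩ : c ∈ Icc (-1:ℝ) 1 := ⟨neg_one_le_cos _, cos_le_one _⟩
  obtain ⟨hτ0, hτ1⟩ := hτ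
  set m := min (τ * (τ + (1 + c))) ((1 - τ) * ((1 - τ) + (1 + c)))
  set D := τ * (1 - τ) * (2 - (1 - c) * τ)
  have hm : 0 < m := lt_min (mul_pos hτ0 (by linarith)) (mul_pos (by linarith) (by linarith))
  have hD : 0 ≤ D := mul_nonneg (mul_nonneg hτ0.le (by linarith))
    (by nlinarith [mul_nonneg (by linarith : 0 ≤ 1 + c) hτ0.le])
  have hmD : m ≤ 2 * π ^ 2 * D :=
    (min_le_five_mul ⟨hc0, hc1⟩ ⟨hτ0.le, hτ1.le⟩).trans
      (mul_le_mul_of_nonneg_right (by nlinarith [pi_gt_three]) hD)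
  have hsq :
      2 * √(r * l) * √m ≤ 2 * π * √(2 * r * l * τ * (1 - τ) * (2 - (1 - c) * τ)) := by
    rw [← pow_le_pow_iff_left₀ (by positivity) (by positivity) two_ne_zero, mul_pow, mul_pow,
      mul_pow, mul_pow, sq_sqrt (by positivity), sq_sqrt hm.le,
      show 2 * r * l * τ * (1 - τ) * (2 - (1 - c) * τ) = 2 * (r * l) * D by ring,
      sq_sqrt (by positivity)]
    nlinarith [mul_le_mul_of_nonneg_left hmD (mul_pos hr hl).le]
  calc K2 l τ r t ≤ 1 / (2 * √(r * l) * √m) := one_div_le_one_div_of_le (by positivity) hsq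
    _ = 1 / (2 * √(r * l)) * (1 / √m) := (one_div_mul_one_div _ _).symm
    _ ≤ _ := mul_le_mul_of_nonneg_left one_div_sqrt_min_le (by positivity)

theorem intervalIntegrable_K2 (hr : 0 < r) (hl : 0 < l) (hb : 0 < 1 + cos (phiK l r t)) :
    IntervalIntegrable (fun τ => K2 l τ r t) volume 0 1 := by
  refine ((intervalIntegrable_symmetric_majorant hb).const_mul (1 / (2 * √(r * l)))).mono_fun'
    (Measurable.aestronglyMeasurable (by unfold K2; fun_prop)) ?_
  rw [uIoc_of_le zero_le_one, ← restrict_Ioo_eq_restrict_Ioc]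
  refine ae_restrict_of_forall_mem measurableSet_Ioo fun τ hτ => ?_
  dsimp only
  rw [norm_of_nonneg (by unfold K2; positivity)]
  exact K2_le_symmetric_majorant hr hl hτ

theorem integral_K2_le (hr : 0 < r) (hl : 0 < l) (hb : 0 < 1 + cos (phiK l r t)) :
    ∫ τ in (0:ℝ)..1, K2 l τ r t ≤ 1 / √(r * l) * log (2 + 4 / (1 + cos (phiK l r t))) := by
  calc ∫ τ in (0:ℝ)..1, K2 l τ r t
      ≤ ∫ τ in (0:ℝ)..1, 1 / (2 * √(r * l)) * (1 / √(τ * (τ + (1 + cos (phiK l r t))))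
          + 1 / √((1 - τ) * ((1 - τ) + (1 + cos (phiK l r t))))) :=
        intervalIntegral.integral_mono_on_of_le_Ioo zero_le_one (intervalIntegrable_K2 hr hl hb)
          ((intervalIntegrable_symmetric_majorant hb).const_mul _)
          fun τ hτ => K2_le_symmetric_majorant hr hl hτ
    _ = 1 / √(r * l) * ∫ s in (0:ℝ)..1, 1 / √(s * (s + (1 + cos (phiK l r t)))) := by
        rw [intervalIntegral.integral_const_mul, integral_symmetric_majorant hb]
        field_simp
    _ ≤ 1 / √(r * l) * log (2 + 4 / (1 + cos (phiK l r t))) :=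
        mul_le_mul_of_nonneg_left (integral_one_div_sqrt_mul_add_le hb) (by positivity)

end K2Integral

section Substitution

variable {φ : ℝ}

theorem hasDerivAt_one_sub_cos_div (φ ψ : ℝ) :
    HasDerivAt (fun ψ => (1 - cos ψ) / (1 - cos φ)) (sin ψ / (1 - cos φ)) ψ := by
  simpa using ((hasDerivAt_cos ψ).const_sub 1).div_const (1 - cos φ)

theorem one_sub_cos_pos (hφ : φ ∈ Ioc 0 π) : 0 < 1 - cos φ := by
  have := strictAntiOn_cos ⟨le_rfl, pi_pos.le⟩ ⟨hφ.1.le, hφ.2⟩ hφ.1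
  rw [cos_zero] at this
  linarith

theorem strictMonoOn_one_sub_cos_div (hφ : φ ∈ Ioc 0 π) :
    StrictMonoOn (fun ψ => (1 - cos ψ) / (1 - cos φ)) (Icc 0 π) := fun _ hx _ hy hxy =>
  div_lt_div_of_pos_right (by linarith [strictAntiOn_cos hx hy hxy]) (one_sub_cos_pos hφ)

theorem image_one_sub_cos_div_Ioo (hφ : φ ∈ Ioc 0 π) :
    (fun ψ => (1 - cos ψ) / (1 - cos φ)) '' Ioo 0 φ = Ioo 0 1 := by
  have hmono := strictMonoOn_one_sub_cos_div hφ
  have h0 : (1 - cos 0) / (1 - cos φ) = 0 := by simp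
  have h1 : (1 - cos φ) / (1 - cos φ) = 1 := div_self (one_sub_cos_pos hφ).ne'
  refine Subset.antisymm ?_ ?_
  · rintro _ ⟨ψ, hψ, rfl⟩
    have hψπ : ψ ∈ Icc 0 π := ⟨hψ.1.le, hψ.2.le.trans hφ.2⟩
    constructor
    · simpa [h0] using hmono ⟨le_rfl, pi_pos.le⟩ hψπ hψ.1
    · simpa [h1] using hmono hψπ ⟨hφ.1.le, hφ.2⟩ hψ.2
  · have := intermediate_value_Ioo hφ.1.le
      (f := fun ψ => (1 - cos ψ) / (1 - cos φ)) (by fun_prop)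
    rwa [h0, h1] at this

theorem injOn_one_sub_cos_div (hφ : φ ∈ Ioc 0 π) :
    InjOn (fun ψ => (1 - cos ψ) / (1 - cos φ)) (Ioo 0 φ) :=
  (strictMonoOn_one_sub_cos_div hφ).injOn.mono fun _ hψ =>
    (⟨hψ.1.le, hψ.2.le.trans hφ.2⟩ : _ ∈ Icc 0 π)

end Substitution

theorem integral_neg_to_eq_two_mul_of_even {f : ℝ → ℝ} {a : ℝ} (hf : ∀ x, f (-x) = f x)
    (hi : IntervalIntegrable f volume 0 a) :
    ∫ x in -a..a, f x = 2 * ∫ x in (0:ℝ)..a, f x := by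
  have hneg : IntervalIntegrable f volume (-a) 0 := by
    simpa [hf] using (hi.comp_sub_left 0).symm
  rw [← intervalIntegral.integral_add_adjacent_intervals hneg hi,
    ← neg_zero, ← intervalIntegral.integral_comp_neg]
  simp only [hf, neg_zero]
  ring

theorem log_two_add_four_div_le {b y : ℝ} (hb : 0 < b) (hy : 0 ≤ y)
    (hby : 1 / b ≤ 2 * y + 1) :
    log (2 + 4 / b) ≤ 3 * log (2 + y) := by
  rw [show 3 * log (2 + y) = log ((2 + y) ^ 3) by rw [log_pow]; norm_num]
  refine log_le_log (by positivity) ?_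
  rw [show 4 / b = 4 * (1 / b) by ring]
  nlinarith [sq_nonneg y, mul_nonneg hy (sq_nonneg y)]

section Kernel

variable {l r t : ℝ}

theorem pos_of_mem_Ioo_abs_sub (hl : l ∈ Ioo |t - r| (t + r)) : 0 < r ∧ 0 < l :=
  ⟨by linarith [(abs_lt.mp hl.1).2, hl.2], (abs_nonneg _).trans_lt hl.1⟩

theorem cos_phiK (hl : l ∈ Ioo |t - r| (t + r)) :
    cos (phiK l r t) = (r ^ 2 + l ^ 2 - t ^ 2) / (2 * r * l) := by
  obtain ⟨hr, hl0⟩ := pos_of_mem_Ioo_abs_sub hl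
  obtain ⟨h1, h2⟩ := abs_lt.mp hl.1
  refine cos_arccos ?_ ?_
  · rw [le_div_iff₀ (by positivity)]; nlinarith
  · rw [div_le_one (by positivity)]
    nlinarith [mul_pos (show 0 < t - r + l by linarith) (show 0 < t + r - l by linarith [hl.2])]

theorem one_add_cos_phiK (hl : l ∈ Ioo |t - r| (t + r)) :
    1 + cos (phiK l r t) = (r + l - t) * (r + l + t) / (2 * r * l) := by
  obtain ⟨hr, hl0⟩ := pos_of_mem_Ioo_abs_sub hl
  rw [cos_phiK hl]
  field_simp
  ring

theorem one_add_cos_phiK_pos (hl : l ∈ Ioo |t - r| (t + r)) : 0 < 1 + cos (phiK l r t) := by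
  obtain ⟨hr, hl0⟩ := pos_of_mem_Ioo_abs_sub hl
  obtain ⟨h1, h2⟩ := abs_lt.mp hl.1
  rw [one_add_cos_phiK hl]
  exact div_pos (mul_pos (by linarith) (by linarith)) (by positivity)

theorem phiK_mem_Ioc (hl : l ∈ Ioo |t - r| (t + r)) : phiK l r t ∈ Ioc 0 π := by
  obtain ⟨hr, hl0⟩ := pos_of_mem_Ioo_abs_sub hl
  obtain ⟨h1, h2⟩ := abs_lt.mp hl.1
  refine ⟨arccos_pos.2 ?_, arccos_le_pi _⟩
  rw [div_lt_one (by positivity)]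
  nlinarith [mul_pos (show 0 < t - r + l by linarith) (show 0 < t + r - l by linarith [hl.2])]

theorem K1_eq_cos_sub_cos_phiK (hl : l ∈ Ioo |t - r| (t + r)) (ψ : ℝ) :
    K1 l ψ r t = 1 / (2 * π * √(2 * r * l * (cos ψ - cos (phiK l r t)))) := by
  obtain ⟨hr, hl0⟩ := pos_of_mem_Ioo_abs_sub hl
  rw [K1, cos_phiK hl]
  congr 3
  field_simp
  ring

theorem abs_deriv_smul_K2_eq_K1 (hl : l ∈ Ioo |t - r| (t + r)) {ψ : ℝ}
    (hψ : ψ ∈ Ioo 0 (phiK l r t)) :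
    |sin ψ / (1 - cos (phiK l r t))| • K2 l ((1 - cos ψ) / (1 - cos (phiK l r t))) r t
      = K1 l ψ r t := by
  obtain ⟨hr, hl0⟩ := pos_of_mem_Ioo_abs_sub hl
  have hφ := phiK_mem_Ioc hl
  have ha := one_sub_cos_pos hφ
  have hsin : 0 < sin ψ := sin_pos_of_pos_of_lt_pi hψ.1 (hψ.2.trans_le hφ.2)
  have hcos : cos (phiK l r t) < cos ψ :=
    strictAntiOn_cos ⟨hψ.1.le, hψ.2.le.trans hφ.2⟩ ⟨hφ.1.le, hφ.2⟩ hψ.2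
  rw [K1_eq_cos_sub_cos_phiK hl]
  set c := cos (phiK l r t)
  have hrad : 2 * r * l * ((1 - cos ψ) / (1 - c)) * (1 - (1 - cos ψ) / (1 - c))
        * (2 - (1 - c) * ((1 - cos ψ) / (1 - c)))
      = (sin ψ / (1 - c)) ^ 2 * (2 * r * l * (cos ψ - c)) := by
    rw [div_pow, sin_sq]
    field_simp
    ring
  rw [K2, hrad, sqrt_mul (sq_nonneg _), sqrt_sq (by positivity), smul_eq_mul,
    abs_of_pos (by positivity)]
  have : 0 < √(2 * r * l * (cos ψ - c)) := sqrt_pos.2 (by nlinarith [mul_pos hr hl0])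
  field_simp

theorem integrableOn_K1 (hl : l ∈ Ioo |t - r| (t + r)) :
    IntegrableOn (fun ψ => K1 l ψ r t) (Ioo 0 (phiK l r t)) := by
  obtain ⟨hr, hl0⟩ := pos_of_mem_Ioo_abs_sub hl
  have hφ := phiK_mem_Ioc hl
  have hK2 := (intervalIntegrable_K2 (t := t) hr hl0 (one_add_cos_phiK_pos hl)).1
  rw [integrableOn_Ioc_iff_integrableOn_Ioo, ← image_one_sub_cos_div_Ioo hφ] at hK2
  rw [integrableOn_image_iff_integrableOn_abs_deriv_smul measurableSet_Ioo
    (fun ψ _ => (hasDerivAt_one_sub_cos_div _ ψ).hasDerivWithinAt) (injOn_one_sub_cos_div hφ)]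
    at hK2
  exact hK2.congr_fun (fun ψ hψ => abs_deriv_smul_K2_eq_K1 hl hψ) measurableSet_Ioo

theorem setIntegral_K1_eq (hl : l ∈ Ioo |t - r| (t + r)) :
    ∫ ψ in Ioo 0 (phiK l r t), K1 l ψ r t = ∫ τ in Ioo 0 1, K2 l τ r t := by
  have hφ := phiK_mem_Ioc hl
  rw [← image_one_sub_cos_div_Ioo hφ, integral_image_eq_integral_abs_deriv_smul measurableSet_Ioo
    (fun ψ _ => (hasDerivAt_one_sub_cos_div _ ψ).hasDerivWithinAt) (injOn_one_sub_cos_div hφ)]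
  exact (setIntegral_congr_fun measurableSet_Ioo fun ψ hψ => abs_deriv_smul_K2_eq_K1 hl hψ).symm

theorem integral_K1_eq_two_mul_integral_K2 (hl : l ∈ Ioo |t - r| (t + r)) :
    ∫ ψ in -phiK l r t..phiK l r t, K1 l ψ r t = 2 * ∫ τ in (0:ℝ)..1, K2 l τ r t := by
  have hφ := (phiK_mem_Ioc hl).1.le
  rw [integral_neg_to_eq_two_mul_of_even (fun ψ => by rw [K1, K1, cos_neg])
      ((intervalIntegrable_iff_integrableOn_Ioo_of_le hφ).2 (integrableOn_K1 hl)),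
    intervalIntegral.integral_of_le hφ, intervalIntegral.integral_of_le zero_le_one,
    integral_Ioc_eq_integral_Ioo, integral_Ioc_eq_integral_Ioo, setIntegral_K1_eq hl]

theorem log_two_add_four_div_one_add_cos_phiK_le (hl : l ∈ Ioo |t - r| (t + r)) :
    log (2 + 4 / (1 + cos (phiK l r t)))
      ≤ 3 * log (2 + r * l * (if 0 < t - r then (1:ℝ) else 0) /
          ((l - |t - r|) * ((t + r) - l))) := by
  obtain ⟨hr, hl0⟩ := pos_of_mem_Ioo_abs_sub hl
  obtain ⟨h1, h2⟩ := abs_lt.mp hl.1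
  have h3 := hl.2
  refine log_two_add_four_div_le (one_add_cos_phiK_pos hl)
    (div_nonneg (mul_nonneg (by positivity) (by split_ifs <;> norm_num))
      (mul_pos (by linarith [hl.1]) (by linarith)).le) ?_
  rw [one_add_cos_phiK hl, one_div_div]
  by_cases htr : 0 < t - r
  · rw [if_pos htr, abs_of_pos htr, mul_one]
    calc 2 * r * l / ((r + l - t) * (r + l + t)) ≤ 2 * r * l / ((r + l - t) * (t + r - l)) :=
          div_le_div_of_nonneg_left (by positivity) (mul_pos (by linarith) (by linarith))
            (mul_le_mul_of_nonneg_left (by linarith) (by linarith))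
      _ = 2 * (r * l / ((l - (t - r)) * (t + r - l))) := by ring_nf
      _ ≤ _ := le_add_of_nonneg_right zero_le_one
  · rw [if_neg htr, mul_zero, zero_div, mul_zero, zero_add,
      div_le_one (mul_pos (by linarith) (by linarith))]
    nlinarith [mul_nonneg (show 0 ≤ r - t by linarith) (show 0 ≤ r + t by linarith)]

end Kernel

theorem stmt10 :
    ∃ C : ℝ, 0 < C ∧ ∀ r t l : ℝ, 0 < r → 0 < t → |t - r| < l → l < t + r →
      (∫ ψ in (-(phiK l r t))..(phiK l r t), K1 l ψ r t)
          = 2 * ∫ τ in (0:ℝ)..1, K2 l τ r t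
        ∧ (∫ ψ in (-(phiK l r t))..(phiK l r t), K1 l ψ r t)
          ≤ C / Real.sqrt (r * l) *
              Real.log (2 + r * l * (if 0 < t - r then (1:ℝ) else 0) /
                ((l - |t - r|) * ((t + r) - l))) := by
  refine ⟨6, by norm_num, fun r t l hr _ h1 h2 => ?_⟩
  have hl : l ∈ Ioo |t - r| (t + r) := ⟨h1, h2⟩
  have hl0 := (pos_of_mem_Ioo_abs_sub hl).2
  rw [integral_K1_eq_two_mul_integral_K2 hl]
  refine ⟨rfl, ?_⟩
  calc 2 * ∫ τ in (0:ℝ)..1, K2 l τ r t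
      ≤ 2 * (1 / √(r * l) * log (2 + 4 / (1 + cos (phiK l r t)))) := by
        gcongr; exact integral_K2_le hr hl0 (one_add_cos_phiK_pos hl)
    _ ≤ 2 * (1 / √(r * l) * (3 * log (2 + r * l * (if 0 < t - r then (1:ℝ) else 0) /
          ((l - |t - r|) * ((t + r) - l))))) := by
        gcongr; exact log_two_add_four_div_one_add_cos_phiK_le hl
    _ = _ := by ring
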